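/- arXiv:2301.12998 — 6 statements merged into one kernel-verified Lean document; each statement's English description precedes it below -/
import Mathlib

section
/- Let Ω ⊆ ℝ^D be measurable with Lebesgue measure |Ω| > 0, let x_1,…,x_N ∈ Ω be distinct points, and let φ_1,…,φ_N : Ω → ℝ satisfy φ_n(x_m) = δ_{mn} for all m,n ∈ {1,…,N} (which holds for translated compactly supported radial kernels with nonoverlapping supports). Let p_1,…,p_K : Ω → ℝ satisfy the discrete orthonormality [p_k,p_l]_{X_N} = δ_{kl} for all k,l ∈ {1,…,K}. For m ∈ {1,…,N} define c_m(x) = φ_m(x) − (|Ω|/N) Σ_{n=1}^N (Σ_{k=1}^K p_k(x_m) p_k(x_n)) φ_n(x) + (|Ω|/N) Σ_{k=1}^K p_k(x_m) p_k(x). Then: (i) c_m(x_n) = δ_{mn} for all n ∈ {1,…,N} (the cardinal property), and (ii) the coefficients α_n^{(m)} = δ_{mn} − (|Ω|/N) Σ_{k=1}^K p_k(x_m) p_k(x_n) satisfy Σ_{n=1}^N α_n^{(m)} p_l(x_n) = 0 for every l ∈ {1,…,K} (the moment side conditions of RBF interpolation). Hence c_m is the m-th cardinal function of the RBF interpolation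 process. -/
open MeasureTheory Matrix

/-!
At the nodes the kernel translates act as the identity, so the two correction terms of `c_m`
cancel at every `xₙ`. Writing `P` for the matrix `(pₖ(xₙ))ₖₙ` and `w = |Ω|/N`, orthonormality
reads `w • P Pᵀ = 1`, so `1 - w • Pᵀ P` is the projection onto the orthogonal complement of the
row space of `P`; the moment conditions say exactly that it annihilates `Pᵀ`.
-/

lemma sum_mul_apply_of_apply_eq_ite {ι α : Type*} [Fintype ι] [DecidableEq ι]
    (x : ι → α) (φ : ι → α → ℝ) (hφ : ∀ m n, φ n (x m) = if m = n then 1 else 0)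
    (a : ι → ℝ) (m : ι) :
    ∑ n, a n * φ n (x m) = a m := by
  simp [hφ]

lemma one_sub_smul_transpose_mul_self_mul_transpose {m n : Type*} [Fintype m] [Fintype n]
    [DecidableEq m] [DecidableEq n] {Q : Matrix m n ℝ} {w : ℝ} (hQ : w • (Q * Qᵀ) = 1) :
    (1 - w • (Qᵀ * Q)) * Qᵀ = 0 := by
  rw [Matrix.sub_mul, Matrix.one_mul, Matrix.smul_mul, Matrix.mul_assoc, ← Matrix.mul_smul, hQ,
    Matrix.mul_one, sub_self]

theorem cardinal_function_explicit_representation_general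
    (D N K : ℕ) (Ω : Set (EuclideanSpace ℝ (Fin D)))
    (x : Fin N → EuclideanSpace ℝ (Fin D))
    (φ : Fin N → EuclideanSpace ℝ (Fin D) → ℝ)
    (hφ : ∀ m n : Fin N, φ n (x m) = if m = n then 1 else 0)
    (p : Fin K → EuclideanSpace ℝ (Fin D) → ℝ)
    (hp : ∀ k l : Fin K,
      ((volume Ω).toReal / N) * ∑ n, p k (x n) * p l (x n) = if k = l then 1 else 0) :
    ∀ m : Fin N,
      (∀ n : Fin N,
        (φ m (x n)
          - ((volume Ω).toReal / N) *
              ∑ n' : Fin N, (∑ k, p k (x m) * p k (x n')) * φ n' (x n)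
          + ((volume Ω).toReal / N) * ∑ k, p k (x m) * p k (x n))
          = if m = n then 1 else 0) ∧
      (∀ l : Fin K,
        ∑ n : Fin N,
          ((if m = n then (1:ℝ) else 0)
            - ((volume Ω).toReal / N) * ∑ k, p k (x m) * p k (x n)) * p l (x n) = 0) := by
  intro m
  refine ⟨fun n => ?_, fun l => ?_⟩
  · rw [sum_mul_apply_of_apply_eq_ite x φ hφ]
    simp only [hφ, eq_comm (a := n)]
    ring
  · let P : Matrix (Fin K) (Fin N) ℝ := Matrix.of fun k n => p k (x n)
    have hP : ((volume Ω).toReal / N) • (P * Pᵀ) = 1 := by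
      ext k l
      simpa [P, Matrix.mul_apply, Matrix.one_apply] using hp k l
    have hmoments := congrFun₂ (one_sub_smul_transpose_mul_self_mul_transpose hP) m l
    simpa [P, Matrix.mul_apply, Matrix.one_apply] using hmoments

/-- **Explicit representation of the cardinal functions** of RBF interpolation with
compactly supported kernels with nonoverlapping supports (so that `φₙ(xₘ) = δₘₙ`)
and a discretely orthonormal polynomial basis `p₁, …, p_K`:
the function
`c_m(x) = φ_m(x) − (|Ω|/N) Σₙ (Σₖ pₖ(xₘ) pₖ(xₙ)) φₙ(x) + (|Ω|/N) Σₖ pₖ(xₘ) pₖ(x)`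
satisfies the cardinal property `c_m(xₙ) = δₘₙ`, and its kernel coefficients
`αₙ⁽ᵐ⁾ = δₘₙ − (|Ω|/N) Σₖ pₖ(xₘ) pₖ(xₙ)` satisfy the moment side conditions
`Σₙ αₙ⁽ᵐ⁾ p_l(xₙ) = 0`. -/
theorem cardinal_function_explicit_representation
    (D N K : ℕ) (Ω : Set (EuclideanSpace ℝ (Fin D))) (hΩ : MeasurableSet Ω)
    (hvol : 0 < (volume Ω).toReal)
    (x : Fin N → EuclideanSpace ℝ (Fin D)) (hx : ∀ n, x n ∈ Ω)
    (hdist : Function.Injective x)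
    (φ : Fin N → EuclideanSpace ℝ (Fin D) → ℝ)
    (hφ : ∀ m n : Fin N, φ n (x m) = if m = n then 1 else 0)
    (p : Fin K → EuclideanSpace ℝ (Fin D) → ℝ)
    (hp : ∀ k l : Fin K,
      ((volume Ω).toReal / N) * ∑ n, p k (x n) * p l (x n) = if k = l then 1 else 0) :
    ∀ m : Fin N,
      (∀ n : Fin N,
        (φ m (x n)
          - ((volume Ω).toReal / N) *
              ∑ n' : Fin N, (∑ k, p k (x m) * p k (x n')) * φ n' (x n)
          + ((volume Ω).toReal / N) * ∑ k, p k (x m) * p k (x n))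
          = if m = n then 1 else 0) ∧
      (∀ l : Fin K,
        ∑ n : Fin N,
          ((if m = n then (1:ℝ) else 0)
            - ((volume Ω).toReal / N) * ∑ k, p k (x m) * p k (x n)) * p l (x n) = 0) :=
  cardinal_function_explicit_representation_general D N K Ω x φ hφ p hp
end

section
/- Let Ω ⊆ ℝ^D be a bounded measurable set with Lebesgue measure |Ω| > 0, let d ∈ ℕ, and let (x_n)_{n∈ℕ} be a sequence of points in Ω such that for all polynomial functions u, v of degree at most d on ℝ^D one has lim_{N→∞} (|Ω|/N) Σ_{n=1}^N u(x_n) v(x_n) = ∫_Ω u(x) v(x) dx (which holds in particular when (x_n) is equidistributed in Ω). Let K ∈ ℕ, and for each N let p_1^{(N)},…,p_K^{(N)} be polynomial functions of degree at most d satisfying the discrete orthonormality [p_k^{(N)}, p_l^{(N)}]_{X_N} = δ_{kl} for all k,l ∈ {1,…,K}. Then lim_{N→∞} ∫_Ω p_k^{(N)}(x) p_l^{(N)}(x) dx = δ_{kl} for all k,l ∈ {1,…,K}. -/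
/-!
The continuous form `B₀(u, v) = ∫_Ω u v` is positive definite on the finite-dimensional space of
polynomials of degree at most `d`, because a nonzero polynomial vanishes only on a null set
(induction on the number of variables and Fubini). In finite dimension it is therefore coercive,
`C ‖u‖² ≤ B₀(u, u)`, and the discrete forms `B_N` converge to it in operator norm. Once
`‖B_N - B₀‖ ≤ C / 2`, discrete orthonormality bounds `‖p_k⁽ᴺ⁾‖² ≤ 2 / C`, hence
`|B₀(p_k⁽ᴺ⁾, p_l⁽ᴺ⁾) - δₖₗ| = |(B₀ - B_N)(p_k⁽ᴺ⁾, p_l⁽ᴺ⁾)| ≤ 2 ‖B_N - B₀‖ / C → 0`.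
-/

open MeasureTheory Filter Topology

theorem ContinuousLinearMap.tendsto_of_tendsto_apply {𝕜 E F α : Type*}
    [NontriviallyNormedField 𝕜] [CompleteSpace 𝕜] [NormedAddCommGroup E] [NormedSpace 𝕜 E]
    [FiniteDimensional 𝕜 E] [NormedAddCommGroup F] [NormedSpace 𝕜 F] {l : Filter α}
    {f : α → E →L[𝕜] F} {g : E →L[𝕜] F} (h : ∀ u, Tendsto (fun a => f a u) l (𝓝 (g u))) :
    Tendsto f l (𝓝 g) := by
  let b := Module.finBasis 𝕜 E
  obtain ⟨C, -, hC⟩ := b.exists_opNorm_le (F := F)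
  rw [tendsto_iff_norm_sub_tendsto_zero]
  refine squeeze_zero (fun _ => norm_nonneg _) (fun a => hC (M := ∑ i, ‖(f a - g) (b i)‖)
    (by positivity) fun i => Finset.single_le_sum (f := fun i => ‖(f a - g) (b i)‖)
      (fun _ _ => norm_nonneg _) (Finset.mem_univ i)) ?_
  simpa using (tendsto_finsetSum _ fun i _ =>
    tendsto_iff_norm_sub_tendsto_zero.1 (h (b i))).const_mul C

section Coercive

variable {E : Type*} [NormedAddCommGroup E] [NormedSpace ℝ E]

theorem isCoercive_of_pos [FiniteDimensional ℝ E] {B : E →L[ℝ] E →L[ℝ] ℝ}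
    (hB : ∀ u ≠ 0, 0 < B u u) : IsCoercive B := by
  rcases subsingleton_or_nontrivial E with hE | hE
  · exact ⟨1, one_pos, fun u => by simp [Subsingleton.elim u 0]⟩
  obtain ⟨u₀, hu₀, hmin⟩ := (isCompact_sphere (0 : E) 1).exists_isMinOn
    (NormedSpace.sphere_nonempty.2 zero_le_one) (f := fun u => B u u) (by fun_prop)
  refine ⟨B u₀ u₀, hB u₀ (ne_zero_of_mem_unit_sphere ⟨u₀, hu₀⟩), fun u => ?_⟩
  rcases eq_or_ne u 0 with rfl | hu
  · simp
  have hnorm : ‖u‖ ≠ 0 := norm_ne_zero_iff.2 hu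
  have hmin_u := isMinOn_iff.1 hmin (‖u‖⁻¹ • u) (by simp [norm_smul, hnorm])
  simp only [map_smul, smul_apply, smul_eq_mul] at hmin_u
  calc B u₀ u₀ * ‖u‖ * ‖u‖ ≤ ‖u‖⁻¹ * (‖u‖⁻¹ * B u u) * ‖u‖ * ‖u‖ := by gcongr
    _ = B u u := by field_simp

theorem abs_apply_sub_apply_le (B B₀ : E →L[ℝ] E →L[ℝ] ℝ) (u v : E) :
    |B u v - B₀ u v| ≤ ‖B - B₀‖ * ‖u‖ * ‖v‖ := by
  simpa using (B - B₀).le_opNorm₂ u v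

theorem norm_mul_norm_le_of_apply_self_eq_one {B B₀ : E →L[ℝ] E →L[ℝ] ℝ} {C : ℝ} (hC : 0 < C)
    (hB₀ : ∀ u, C * ‖u‖ * ‖u‖ ≤ B₀ u u) (hB : ‖B - B₀‖ ≤ C / 2) {u : E} (hu : B u u = 1) :
    ‖u‖ * ‖u‖ ≤ 2 / C := by
  have hdiff := neg_le_of_abs_le (abs_apply_sub_apply_le B B₀ u u)
  have : ‖B - B₀‖ * ‖u‖ * ‖u‖ ≤ C / 2 * ‖u‖ * ‖u‖ := by gcongr
  rw [le_div_iff₀ hC]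
  nlinarith [hB₀ u]

theorem IsCoercive.tendsto_apply_apply_of_eventually_orthonormal {α ι : Type*} [DecidableEq ι]
    {l : Filter α} {B : α → E →L[ℝ] E →L[ℝ] ℝ} {B₀ : E →L[ℝ] E →L[ℝ] ℝ}
    (hB₀ : IsCoercive B₀) (hB : Tendsto B l (𝓝 B₀)) {p : α → ι → E}
    (horth : ∀ᶠ a in l, ∀ i j, B a (p a i) (p a j) = if i = j then 1 else 0) (i j : ι) :
    Tendsto (fun a => B₀ (p a i) (p a j)) l (𝓝 (if i = j then 1 else 0)) := by
  obtain ⟨C, hC, hcoer⟩ := hB₀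
  have hdist : Tendsto (fun a => ‖B a - B₀‖) l (𝓝 0) :=
    (tendsto_iff_norm_sub_tendsto_zero (E := E →L[ℝ] E →L[ℝ] ℝ)).1 hB
  rw [tendsto_iff_norm_sub_tendsto_zero]
  refine squeeze_zero' (.of_forall fun _ => norm_nonneg _) ?_
    (by simpa using hdist.mul_const (2 / C))
  filter_upwards [horth, hdist.eventually_le_const (half_pos hC)] with a ha hclose
  have hbound : ∀ k, ‖p a k‖ * ‖p a k‖ ≤ 2 / C := fun k =>
    norm_mul_norm_le_of_apply_self_eq_one hC hcoer hclose (by simp [ha])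
  rw [← ha i j, Real.norm_eq_abs, abs_sub_comm]
  calc |B a (p a i) (p a j) - B₀ (p a i) (p a j)| ≤ ‖B a - B₀‖ * ‖p a i‖ * ‖p a j‖ :=
        abs_apply_sub_apply_le _ _ _ _
    _ ≤ ‖B a - B₀‖ * (2 / C) := by
        rw [mul_assoc]
        gcongr
        nlinarith [hbound i, hbound j, sq_nonneg (‖p a i‖ - ‖p a j‖)]

end Coercive

theorem LinearMap.BilinForm.tendsto_apply_apply_of_eventually_orthonormal {E α ι : Type*}
    [AddCommGroup E] [Module ℝ E] [FiniteDimensional ℝ E] [DecidableEq ι] {l : Filter α}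
    {B : α → LinearMap.BilinForm ℝ E} {B₀ : LinearMap.BilinForm ℝ E}
    (hB : ∀ u v, Tendsto (fun a => B a u v) l (𝓝 (B₀ u v))) (hB₀ : ∀ u ≠ 0, 0 < B₀ u u)
    {p : α → ι → E} (horth : ∀ᶠ a in l, ∀ i j, B a (p a i) (p a j) = if i = j then 1 else 0)
    (i j : ι) : Tendsto (fun a => B₀ (p a i) (p a j)) l (𝓝 (if i = j then 1 else 0)) := by
  -- transport to coordinates, where a norm is available
  let e := (Module.finBasis ℝ E).equivFun
  let toCLM (B : LinearMap.BilinForm ℝ E) : (_ →L[ℝ] _ →L[ℝ] ℝ) :=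
    LinearMap.toContinuousLinearMap (LinearMap.toContinuousLinearMap.toLinearMap ∘ₗ
      B.compl₁₂ e.symm.toLinearMap e.symm.toLinearMap)
  have toCLM_apply (B : LinearMap.BilinForm ℝ E) (u v : E) : toCLM B (e u) (e v) = B u v := by
    simp [toCLM]
  have hB' : Tendsto (fun a => toCLM (B a)) l (𝓝 (toCLM B₀)) :=
    ContinuousLinearMap.tendsto_of_tendsto_apply fun u =>
      ContinuousLinearMap.tendsto_of_tendsto_apply fun v => by
        simpa [toCLM] using hB (e.symm u) (e.symm v)
  have hB₀' : IsCoercive (toCLM B₀) := isCoercive_of_pos fun u hu => by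
    simpa [toCLM] using hB₀ (e.symm u) (by simpa using hu)
  simpa only [toCLM_apply] using hB₀'.tendsto_apply_apply_of_eventually_orthonormal hB'
    (p := fun a k => e (p a k)) (horth.mono fun a ha => by simpa only [toCLM_apply] using ha) i j

theorem MvPolynomial.ae_eval_ne_zero {n : ℕ} {p : MvPolynomial (Fin n) ℝ} (hp : p ≠ 0) :
    ∀ᵐ y : Fin n → ℝ, eval y p ≠ 0 := by
  induction n with
  | zero =>
    obtain ⟨c, rfl⟩ := C_surjective (Fin 0) p
    exact .of_forall fun y => by simpa using hp
  | succ n ih =>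
    set q := finSuccEquiv ℝ n p
    have hq : q ≠ 0 := (finSuccEquiv ℝ n).map_ne_zero_iff.2 hp
    have hslice : ∀ᵐ s : Fin n → ℝ, ∀ᵐ t : ℝ, eval (Fin.cons t s) p ≠ 0 := by
      filter_upwards [ih (Polynomial.leadingCoeff_ne_zero.2 hq)] with s hs
      have hqs : q.map (eval s) ≠ 0 := fun h => hs (by
        simpa [Polynomial.coeff_map] using Polynomial.ext_iff.1 h q.natDegree)
      simp_rw [ne_eq, eval_eq_eval_mv_eval']
      exact measure_eq_zero_iff_ae_notMem.1
        ((Polynomial.finite_setOfPred_isRoot hqs).measure_zero _)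
    have hmeas : MeasurableSet {z : ℝ × (Fin n → ℝ) | eval (Fin.cons z.1 z.2) p ≠ 0} :=
      (isOpen_ne_fun ((continuous_eval p).comp (continuous_fst.finCons continuous_snd))
        continuous_const).measurableSet
    have hprod : ∀ᵐ z : ℝ × (Fin n → ℝ), eval (Fin.cons z.1 z.2) p ≠ 0 :=
      (Measure.ae_prod_iff_ae_ae hmeas).2 ((Measure.ae_ae_comm hmeas).2 hslice)
    simpa using (volume_preserving_piFinSuccAbove (fun _ => ℝ) 0).quasiMeasurePreserving.ae hprod

section Polynomials

variable {D : ℕ}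

theorem MvPolynomial.continuous_eval_ofLp (p : MvPolynomial (Fin D) ℝ) :
    Continuous fun y : EuclideanSpace ℝ (Fin D) => eval (fun i => y i) p :=
  (continuous_eval p).comp (PiLp.continuous_ofLp 2 _)

theorem MvPolynomial.integrableOn_eval_mul_eval {Ω : Set (EuclideanSpace ℝ (Fin D))}
    (hΩ : Bornology.IsBounded Ω) (u v : MvPolynomial (Fin D) ℝ) :
    IntegrableOn (fun y => eval (fun i => y i) u * eval (fun i => y i) v) Ω :=
  (((continuous_eval_ofLp u).mul (continuous_eval_ofLp v)).continuousOn.integrableOn_compact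
    hΩ.isCompact_closure).mono_set subset_closure

theorem MvPolynomial.setIntegral_eval_mul_self_pos {Ω : Set (EuclideanSpace ℝ (Fin D))}
    (hΩ : Bornology.IsBounded Ω) (hvol : volume Ω ≠ 0) {u : MvPolynomial (Fin D) ℝ}
    (hu : u ≠ 0) : 0 < ∫ y in Ω, eval (fun i => y i) u * eval (fun i => y i) u := by
  have hne : ∀ᵐ y ∂volume.restrict Ω, eval (fun i => y i) u * eval (fun i => y i) u ≠ 0 :=
    ae_restrict_of_ae <| by simpa using
      (PiLp.volume_preserving_ofLp (Fin D)).quasiMeasurePreserving.ae (ae_eval_ne_zero hu)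
  rw [integral_pos_iff_support_of_nonneg (fun y => mul_self_nonneg _)
    (integrableOn_eval_mul_eval hΩ u u), pos_iff_ne_zero]
  intro hsupp
  refine hvol (Measure.restrict_eq_zero.1 (ae_eq_bot.1 (eventually_false_iff_eq_bot.1 ?_)))
  filter_upwards [hne, measure_eq_zero_iff_ae_notMem.1 hsupp] with y hy hy'
  exact hy (by simpa using hy')

variable (Ω : Set (EuclideanSpace ℝ (Fin D)))

noncomputable def sampleGramForm (x : ℕ → EuclideanSpace ℝ (Fin D)) (N : ℕ) :
    LinearMap.BilinForm ℝ (MvPolynomial (Fin D) ℝ) :=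
  LinearMap.mk₂ ℝ (fun u v => ((volume Ω).toReal / N) * ∑ n ∈ Finset.range N,
      MvPolynomial.eval (fun i => x n i) u * MvPolynomial.eval (fun i => x n i) v)
    (fun u u' v => by simp only [map_add, add_mul, Finset.sum_add_distrib, mul_add])
    (fun c u v => by
      simp only [MvPolynomial.smul_eval, smul_eq_mul, Finset.mul_sum]
      exact Finset.sum_congr rfl fun _ _ => by ring)
    (fun u v v' => by simp only [map_add, mul_add, Finset.sum_add_distrib])
    (fun c u v => by
      simp only [MvPolynomial.smul_eval, smul_eq_mul, Finset.mul_sum]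
      exact Finset.sum_congr rfl fun _ _ => by ring)

noncomputable def setIntegralGramForm (hΩ : Bornology.IsBounded Ω) :
    LinearMap.BilinForm ℝ (MvPolynomial (Fin D) ℝ) :=
  LinearMap.mk₂ ℝ (fun u v => ∫ y in Ω,
      MvPolynomial.eval (fun i => y i) u * MvPolynomial.eval (fun i => y i) v)
    (fun u u' v => by
      simp only [map_add, add_mul]
      exact integral_add (MvPolynomial.integrableOn_eval_mul_eval hΩ u v)
        (MvPolynomial.integrableOn_eval_mul_eval hΩ u' v))
    (fun c u v => by
      simp only [MvPolynomial.smul_eval, smul_eq_mul, mul_assoc, integral_const_mul])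
    (fun u v v' => by
      simp only [map_add, mul_add]
      exact integral_add (MvPolynomial.integrableOn_eval_mul_eval hΩ u v)
        (MvPolynomial.integrableOn_eval_mul_eval hΩ u v'))
    (fun c u v => by
      simp only [MvPolynomial.smul_eval, smul_eq_mul, mul_left_comm _ c, integral_const_mul])

end Polynomials

theorem dops_continuous_gram_tendsto_delta_general
    (D d K : ℕ) (Ω : Set (EuclideanSpace ℝ (Fin D)))
    (hΩbd : Bornology.IsBounded Ω)
    (hvol : 0 < (volume Ω).toReal)
    (x : ℕ → EuclideanSpace ℝ (Fin D))
    (hconv : ∀ u v : MvPolynomial (Fin D) ℝ, u.totalDegree ≤ d → v.totalDegree ≤ d →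
      Tendsto (fun N : ℕ =>
          ((volume Ω).toReal / N) * ∑ n ∈ Finset.range N,
            MvPolynomial.eval (fun i => x n i) u * MvPolynomial.eval (fun i => x n i) v)
        atTop
        (nhds (∫ y in Ω, MvPolynomial.eval (fun i => y i) u *
          MvPolynomial.eval (fun i => y i) v)))
    (p : ℕ → Fin K → MvPolynomial (Fin D) ℝ)
    (hdeg : ∀ N k, (p N k).totalDegree ≤ d)
    (horth : ∀ N : ℕ, 1 ≤ N → ∀ k l : Fin K,
      ((volume Ω).toReal / N) * ∑ n ∈ Finset.range N,
          MvPolynomial.eval (fun i => x n i) (p N k) *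
            MvPolynomial.eval (fun i => x n i) (p N l)
        = if k = l then 1 else 0) :
    ∀ k l : Fin K,
      Tendsto (fun N : ℕ =>
          ∫ y in Ω, MvPolynomial.eval (fun i => y i) (p N k) *
            MvPolynomial.eval (fun i => y i) (p N l))
        atTop (nhds (if k = l then 1 else 0)) := by
  let V := MvPolynomial.restrictTotalDegree (Fin D) ℝ d
  have hvol' : volume Ω ≠ 0 := (ENNReal.toReal_pos_iff.1 hvol).1.ne'
  exact LinearMap.BilinForm.tendsto_apply_apply_of_eventually_orthonormal
    (B := fun N => (sampleGramForm Ω x N).compl₁₂ V.subtype V.subtype)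
    (B₀ := (setIntegralGramForm Ω hΩbd).compl₁₂ V.subtype V.subtype)
    (p := fun N k => ⟨p N k, (MvPolynomial.mem_restrictTotalDegree _ _ _).2 (hdeg N k)⟩)
    (fun u v => hconv u v ((MvPolynomial.mem_restrictTotalDegree _ _ _).1 u.2)
      ((MvPolynomial.mem_restrictTotalDegree _ _ _).1 v.2))
    (fun u hu => MvPolynomial.setIntegral_eval_mul_self_pos hΩbd hvol' (by simpa using hu))
    ((eventually_ge_atTop 1).mono fun N hN => horth N hN)

/-- **Convergence of discrete orthonormal polynomials' continuous Gram matrix.**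
If the discrete inner products of polynomials of degree at most `d` converge to the
continuous ones (as holds for equidistributed points), and for each `N ≥ 1` the family
`p₁⁽ᴺ⁾, …, p_K⁽ᴺ⁾` is discretely orthonormal, then
`∫_Ω pₖ⁽ᴺ⁾ p_l⁽ᴺ⁾ → δₖₗ` as `N → ∞`. -/
theorem dops_continuous_gram_tendsto_delta
    (D d K : ℕ) (Ω : Set (EuclideanSpace ℝ (Fin D)))
    (hΩmeas : MeasurableSet Ω) (hΩbd : Bornology.IsBounded Ω)
    (hvol : 0 < (volume Ω).toReal)
    (x : ℕ → EuclideanSpace ℝ (Fin D)) (hx : ∀ n, x n ∈ Ω)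
    (hconv : ∀ u v : MvPolynomial (Fin D) ℝ, u.totalDegree ≤ d → v.totalDegree ≤ d →
      Tendsto (fun N : ℕ =>
          ((volume Ω).toReal / N) * ∑ n ∈ Finset.range N,
            MvPolynomial.eval (fun i => x n i) u * MvPolynomial.eval (fun i => x n i) v)
        atTop
        (nhds (∫ y in Ω, MvPolynomial.eval (fun i => y i) u *
          MvPolynomial.eval (fun i => y i) v)))
    (p : ℕ → Fin K → MvPolynomial (Fin D) ℝ)
    (hdeg : ∀ N k, (p N k).totalDegree ≤ d)
    (horth : ∀ N : ℕ, 1 ≤ N → ∀ k l : Fin K,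
      ((volume Ω).toReal / N) * ∑ n ∈ Finset.range N,
          MvPolynomial.eval (fun i => x n i) (p N k) *
            MvPolynomial.eval (fun i => x n i) (p N l)
        = if k = l then 1 else 0) :
    ∀ k l : Fin K,
      Tendsto (fun N : ℕ =>
          ∫ y in Ω, MvPolynomial.eval (fun i => y i) (p N k) *
            MvPolynomial.eval (fun i => y i) (p N l))
        atTop (nhds (if k = l then 1 else 0)) :=
  dops_continuous_gram_tendsto_delta_general D d K Ω hΩbd hvol x hconv p hdeg horth
end

section
/- Let Ω ⊆ ℝ^D be measurable and let ω : Ω → ℝ be nonnegative, integrable, and essentially bounded, with ‖I‖_∞ = ∫_Ω ω(x) dx. For each N ∈ ℕ let w^{(N)}, ŵ^{(N)} ∈ ℝ^N and let T_N : Ω → ℝ^N be measurable with each component (T_N)_n·ω integrable and x ↦ Σ_{n=1}^N |(T_N(x))_n| integrable, such that w_n^{(N)} = ŵ_n^{(N)} − ∫_Ω (T_N(x))_n ω(x) dx for all n = 1,…,N (the relation between the weights of the polynomial-augmented RBF quadrature and the pure RBF quadrature, with T_N = Bτ). Assume lim_{N→∞} ∫_Ω Σ_{n=1}^N |(T_N(x))_n|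 dx = 0. Then lim_{N→∞} Σ_{n=1}^N |ŵ_n^{(N)}| = ‖I‖_∞ if and only if lim_{N→∞} Σ_{n=1}^N |w_n^{(N)}| = ‖I‖_∞; that is, either both the pure and the polynomial-augmented RBF quadrature formulas are asymptotically stable or neither is. -/
/-!
Subtracting the correction `∫ Tₙ ω` from each weight moves `Σₙ |ŵₙ|` by at most
`Σₙ |∫ Tₙ ω| ≤ ‖ω‖_∞ ∫ Σₙ |Tₙ|`, which tends to zero; so the two sums of absolute weights have
the same limit, if either has one.
-/

open MeasureTheory Filter

theorem abs_sum_abs_sub_sum_abs_le {ι : Type*} (s : Finset ι) (a b : ι → ℝ) :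
    |(∑ i ∈ s, |a i|) - (∑ i ∈ s, |b i|)| ≤ ∑ i ∈ s, |a i - b i| := by
  rw [← Finset.sum_sub_distrib]
  exact (Finset.abs_sum_le_sum_abs _ _).trans
    (Finset.sum_le_sum fun i _ => abs_abs_sub_abs_le_abs_sub _ _)

theorem sum_abs_integral_mul_le {α ι : Type*} [MeasurableSpace α] {μ : Measure α}
    (s : Finset ι) {f : ι → α → ℝ} {g : α → ℝ} {M : ℝ}
    (hfg : ∀ i ∈ s, Integrable (fun x => f i x * g x) μ)
    (hf : Integrable (fun x => ∑ i ∈ s, |f i x|) μ) (hg : ∀ᵐ x ∂μ, |g x| ≤ M) :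
    ∑ i ∈ s, |∫ x, f i x * g x ∂μ| ≤ M * ∫ x, ∑ i ∈ s, |f i x| ∂μ :=
  calc ∑ i ∈ s, |∫ x, f i x * g x ∂μ|
      ≤ ∑ i ∈ s, ∫ x, |f i x * g x| ∂μ :=
        Finset.sum_le_sum fun i _ => abs_integral_le_integral_abs
    _ = ∫ x, ∑ i ∈ s, |f i x * g x| ∂μ :=
        (integral_finsetSum s fun i hi => (hfg i hi).abs).symm
    _ ≤ ∫ x, M * ∑ i ∈ s, |f i x| ∂μ := by
        refine integral_mono_ae (integrable_finsetSum s fun i hi => (hfg i hi).abs)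
          (hf.const_mul M) ?_
        filter_upwards [hg] with x hgx
        rw [Finset.mul_sum]
        refine Finset.sum_le_sum fun i _ => ?_
        rw [abs_mul, mul_comm M]
        exact mul_le_mul_of_nonneg_left hgx (abs_nonneg _)
    _ = M * ∫ x, ∑ i ∈ s, |f i x| ∂μ := integral_const_mul M _

theorem asymptotic_stability_independent_of_polynomials_general
    (D : ℕ) (Ω : Set (EuclideanSpace ℝ (Fin D))) (hΩ : MeasurableSet Ω)
    (ω : EuclideanSpace ℝ (Fin D) → ℝ)
    (hω0 : ∀ y ∈ Ω, 0 ≤ ω y)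
    (hωbd : ∃ M, ∀ᵐ y ∂(volume.restrict Ω), ω y ≤ M)
    (w what : (N : ℕ) → Fin N → ℝ)
    (T : (N : ℕ) → EuclideanSpace ℝ (Fin D) → Fin N → ℝ)
    (hTint : ∀ N (n : Fin N), IntegrableOn (fun y => T N y n * ω y) Ω)
    (hTl1int : ∀ N : ℕ, IntegrableOn (fun y => ∑ n : Fin N, |T N y n|) Ω)
    (hrel : ∀ N (n : Fin N), w N n = what N n - ∫ y in Ω, T N y n * ω y)
    (hTlim : Tendsto (fun N : ℕ => ∫ y in Ω, ∑ n : Fin N, |T N y n|) atTop (nhds 0)) :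
    Tendsto (fun N : ℕ => ∑ n : Fin N, |what N n|) atTop (nhds (∫ y in Ω, ω y)) ↔
      Tendsto (fun N : ℕ => ∑ n : Fin N, |w N n|) atTop (nhds (∫ y in Ω, ω y)) := by
  obtain ⟨M, hM⟩ := hωbd
  have hω_abs : ∀ᵐ y ∂(volume.restrict Ω), |ω y| ≤ M := by
    filter_upwards [ae_restrict_mem hΩ, hM] with y hy hMy
    rwa [abs_of_nonneg (hω0 y hy)]
  have hdist : ∀ N, dist (∑ n : Fin N, |what N n|) (∑ n : Fin N, |w N n|) ≤
      M * ∫ y in Ω, ∑ n : Fin N, |T N y n| := fun N =>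
    calc dist (∑ n : Fin N, |what N n|) (∑ n : Fin N, |w N n|)
        ≤ ∑ n : Fin N, |what N n - w N n| := abs_sum_abs_sub_sum_abs_le _ _ _
      _ = ∑ n : Fin N, |∫ y in Ω, T N y n * ω y| := by simp only [hrel, sub_sub_cancel]
      _ ≤ M * ∫ y in Ω, ∑ n : Fin N, |T N y n| :=
        sum_abs_integral_mul_le _ (fun n _ => hTint N n) (hTl1int N) hω_abs
  refine tendsto_iff_of_dist (squeeze_zero (fun _ => dist_nonneg) hdist ?_)
  simpa using hTlim.const_mul M

/-- **Asymptotic stability is independent of polynomial augmentation.**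
If the weights of the polynomial-augmented RBF quadrature and the pure RBF quadrature are
related by `wₙ⁽ᴺ⁾ = ŵₙ⁽ᴺ⁾ − ∫_Ω (T_N(x))ₙ ω(x) dx` and
`∫_Ω Σₙ |(T_N(x))ₙ| dx → 0`, then `Σₙ |ŵₙ⁽ᴺ⁾| → ‖I‖_∞` iff `Σₙ |wₙ⁽ᴺ⁾| → ‖I‖_∞`:
either both quadrature sequences are asymptotically stable or neither is. -/
theorem asymptotic_stability_independent_of_polynomials
    (D : ℕ) (Ω : Set (EuclideanSpace ℝ (Fin D))) (hΩ : MeasurableSet Ω)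
    (ω : EuclideanSpace ℝ (Fin D) → ℝ)
    (hω0 : ∀ y ∈ Ω, 0 ≤ ω y) (hωint : IntegrableOn ω Ω)
    (hωbd : ∃ M, ∀ᵐ y ∂(volume.restrict Ω), ω y ≤ M)
    (w what : (N : ℕ) → Fin N → ℝ)
    (T : (N : ℕ) → EuclideanSpace ℝ (Fin D) → Fin N → ℝ)
    (hTmeas : ∀ N (n : Fin N), Measurable fun y => T N y n)
    (hTint : ∀ N (n : Fin N), IntegrableOn (fun y => T N y n * ω y) Ω)
    (hTl1int : ∀ N : ℕ, IntegrableOn (fun y => ∑ n : Fin N, |T N y n|) Ω)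
    (hrel : ∀ N (n : Fin N), w N n = what N n - ∫ y in Ω, T N y n * ω y)
    (hTlim : Tendsto (fun N : ℕ => ∫ y in Ω, ∑ n : Fin N, |T N y n|) atTop (nhds 0)) :
    Tendsto (fun N : ℕ => ∑ n : Fin N, |what N n|) atTop (nhds (∫ y in Ω, ω y)) ↔
      Tendsto (fun N : ℕ => ∑ n : Fin N, |w N n|) atTop (nhds (∫ y in Ω, ω y)) :=
  asymptotic_stability_independent_of_polynomials_general D Ω hΩ ω hω0 hωbd w what T hTint hTl1int
    hrel hTlim
end

section
/- Let α > 0 and β ≥ 0. Then the integral of the cubic polyharmonic spline kernel φ(r) = r³, with r = ‖(x,y)‖₂ = √(x² + y²), over the right triangle with vertices (0,0), (α,0), and (α,β) satisfies ∫_0^α ∫_0^{(β/α)x} (x² + y²)^{3/2} dy dx = (α/40) ( 3 α⁴ · arsinh(β/α) + β (5α² + 2β²) √(α² + β²) ), where arsinh denotes the inverse hyperbolic sine. -/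
/-!
Substituting `y = x t` shows the inner integral is homogeneous: it equals `x⁴ F(β/α)` with
`F(c) = ∫₀^c (1 + t²)^{3/2} dt`, so the outer integral is `α⁵ F(β/α) / 5`. The function `F` has
the classical primitive `t (1+t²)^{3/2}/4 + 3/8 (t √(1+t²) + arsinh t)`.
-/

open Real intervalIntegral

lemma integral_sq_add_sq_rpow_eq_mul (p c x : ℝ) :
    ∫ y in (0:ℝ)..c * x, (x ^ 2 + y ^ 2) ^ p =
      x * (x ^ 2) ^ p * ∫ t in (0:ℝ)..c, (1 + t ^ 2) ^ p := by
  have hscale : ∀ t : ℝ, (x ^ 2 + (t * x) ^ 2) ^ p = (x ^ 2) ^ p * (1 + t ^ 2) ^ p := fun t => by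
    rw [← mul_rpow (by positivity) (by positivity)]
    ring_nf
  have hsubst := smul_integral_comp_mul_right (fun y => (x ^ 2 + y ^ 2) ^ p) x (a := 0) (b := c)
  rw [zero_mul] at hsubst
  simp only [← hsubst, hscale, integral_const_mul, smul_eq_mul, mul_assoc]

lemma sq_rpow_three_halves {x : ℝ} (hx : 0 ≤ x) : (x ^ 2) ^ ((3:ℝ) / 2) = x ^ 3 := by
  rw [← rpow_natCast_mul hx]
  norm_num

lemma rpow_three_halves_eq_sqrt_pow {a : ℝ} (ha : 0 ≤ a) : a ^ ((3:ℝ) / 2) = √a ^ 3 := by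
  rw [← sq_rpow_three_halves (sqrt_nonneg a), sq_sqrt ha]

lemma hasDerivAt_sqrt_one_add_sq (t : ℝ) :
    HasDerivAt (fun t : ℝ => √(1 + t ^ 2)) (t / √(1 + t ^ 2)) t := by
  have hpos : 0 < 1 + t ^ 2 := by positivity
  convert ((hasDerivAt_pow 2 t).const_add 1).sqrt hpos.ne' using 1
  field_simp
  ring

lemma hasDerivAt_primitive_sqrt_one_add_sq_pow_three (t : ℝ) :
    HasDerivAt (fun t : ℝ => t * √(1 + t ^ 2) ^ 3 / 4 + 3 / 8 * (t * √(1 + t ^ 2) + arsinh t))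
      (√(1 + t ^ 2) ^ 3) t := by
  have hs2 : √(1 + t ^ 2) ^ 2 = 1 + t ^ 2 := sq_sqrt (by positivity)
  have hsqrt := hasDerivAt_sqrt_one_add_sq t
  refine ((((hasDerivAt_id' t).mul (hsqrt.pow 3)).div_const 4).add
    ((((hasDerivAt_id' t).mul hsqrt).add (hasDerivAt_arsinh t)).const_mul (3 / 8))).congr_deriv ?_
  simp only [Pi.pow_apply]
  field_simp
  norm_num
  linear_combination (-24 * √(1 + t ^ 2) ^ 2 - 12) * hs2

lemma integral_one_add_sq_rpow_three_halves (c : ℝ) :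
    ∫ t in (0:ℝ)..c, (1 + t ^ 2) ^ ((3:ℝ) / 2) =
      c * √(1 + c ^ 2) ^ 3 / 4 + 3 / 8 * (c * √(1 + c ^ 2) + arsinh c) := by
  have hcongr : ∀ t ∈ Set.uIcc 0 c, (1 + t ^ 2) ^ ((3:ℝ) / 2) = √(1 + t ^ 2) ^ 3 :=
    fun t _ => rpow_three_halves_eq_sqrt_pow (by positivity)
  have hcont : Continuous fun t : ℝ => √(1 + t ^ 2) ^ 3 := by fun_prop
  rw [integral_congr hcongr, integral_eq_sub_of_hasDerivAt
    (fun t _ => hasDerivAt_primitive_sqrt_one_add_sq_pow_three t) (hcont.intervalIntegrable _ _)]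
  simp

theorem cubic_phs_reference_integral_general (α β : ℝ) (hα : 0 < α) :
    (∫ x in (0:ℝ)..α, ∫ y in (0:ℝ)..(β / α * x), (x ^ 2 + y ^ 2) ^ ((3:ℝ)/2)) =
      α / 40 * (3 * α ^ 4 * Real.arsinh (β / α) +
        β * (5 * α ^ 2 + 2 * β ^ 2) * Real.sqrt (α ^ 2 + β ^ 2)) := by
  have hinner : ∀ x ∈ Set.uIcc 0 α,
      ∫ y in (0:ℝ)..(β / α * x), (x ^ 2 + y ^ 2) ^ ((3:ℝ)/2) =
        (∫ t in (0:ℝ)..β / α, (1 + t ^ 2) ^ ((3:ℝ)/2)) * x ^ 4 := by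
    intro x hx
    rw [Set.uIcc_of_le hα.le] at hx
    rw [integral_sq_add_sq_rpow_eq_mul, sq_rpow_three_halves hx.1]
    ring
  have hsqrt : √(1 + (β / α) ^ 2) = √(α ^ 2 + β ^ 2) / α := by
    rw [show 1 + (β / α) ^ 2 = (α ^ 2 + β ^ 2) / α ^ 2 by field_simp,
      sqrt_div (by positivity), sqrt_sq hα.le]
  have hs2 : √(α ^ 2 + β ^ 2) ^ 2 = α ^ 2 + β ^ 2 := sq_sqrt (by positivity)
  rw [integral_congr hinner, integral_const_mul, integral_pow,
    integral_one_add_sq_rpow_three_halves, hsqrt]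
  field_simp
  norm_num
  linear_combination (320 * α ^ 5 * β * √(α ^ 2 + β ^ 2)) * hs2

/-- Reference integral of the cubic polyharmonic spline `φ(r) = r³` over the right
triangle with vertices `(0,0)`, `(α,0)`, `(α,β)`:
`∫₀^α ∫₀^{(β/α)x} (x² + y²)^{3/2} dy dx
  = (α/40) (3α⁴ arsinh(β/α) + β(5α² + 2β²) √(α² + β²))`. -/
theorem cubic_phs_reference_integral (α β : ℝ) (hα : 0 < α) (hβ : 0 ≤ β) :
    (∫ x in (0:ℝ)..α, ∫ y in (0:ℝ)..(β / α * x), (x ^ 2 + y ^ 2) ^ ((3:ℝ)/2)) =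
      α / 40 * (3 * α ^ 4 * Real.arsinh (β / α) +
        β * (5 * α ^ 2 + 2 * β ^ 2) * Real.sqrt (α ^ 2 + β ^ 2)) :=
  cubic_phs_reference_integral_general α β hα
end

section
/- Let α > 0 and β ≥ 0. Then the integral of the thin plate spline kernel φ(r) = r² log r, with r = ‖(x,y)‖₂ = √(x² + y²), over the right triangle with vertices (0,0), (α,0), and (α,β) satisfies ∫_0^α ∫_0^{(β/α)x} (1/2)(x² + y²) log(x² + y²) dy dx = (α/144) ( 24 α³ arctan(β/α) + 6 β (3α² + β²) log(α² + β²) − 33 α² β − 7 β³ ), where the integrand extends by the value 0 at the origin (consistent with the convention log 0 = 0). -/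
/-!
Integrating by parts in `y`, the inner integral of `(1/2)(x² + y²) log(x² + y²)` has the elementary
primitive `tpsInnerPrimitive`. Along the ray `y = t x` it is homogeneous: because
`log(x² + t²x²) = 2 log x + log(1 + t²)`, it equals `c₁(t) x³ log x + c₂(t) x³`, and the outer
integral reduces to `∫₀^α x³ = α⁴/4` and `∫₀^α x³ log x = α⁴ log α / 4 - α⁴ / 16`.
-/

open Real intervalIntegral

/-- Integration by parts gives `(x²y + y³/3) log(x² + y²) - ∫ (2/3) y² + (4/3) x² - (4/3) x⁴/(x² + y²)`,
whence the polynomial and arctangent terms. -/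
noncomputable def tpsInnerPrimitive (x y : ℝ) : ℝ :=
  (1 / 2) * ((x ^ 2 * y + y ^ 3 / 3) * log (x ^ 2 + y ^ 2) - 2 / 9 * y ^ 3 - 4 / 3 * x ^ 2 * y
    + 4 / 3 * x ^ 3 * arctan (y / x))

theorem hasDerivAt_tpsInnerPrimitive {x : ℝ} (hx : x ≠ 0) (y : ℝ) :
    HasDerivAt (tpsInnerPrimitive x) ((1 / 2) * (x ^ 2 + y ^ 2) * log (x ^ 2 + y ^ 2)) y := by
  have hpos : x ^ 2 + y ^ 2 ≠ 0 := by positivity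
  have hsq : HasDerivAt (fun y : ℝ => x ^ 2 + y ^ 2) (2 * y) y := by
    simpa using (hasDerivAt_pow 2 y).const_add (x ^ 2)
  have hpoly : HasDerivAt (fun y : ℝ => x ^ 2 * y + y ^ 3 / 3) (x ^ 2 + y ^ 2) y := by
    refine (((hasDerivAt_id y).const_mul (x ^ 2)).add
      ((hasDerivAt_pow 3 y).div_const 3)).congr_deriv ?_
    push_cast
    ring
  have harctan := ((hasDerivAt_id y).div_const x).arctan
  have h := (((hpoly.mul (hsq.log hpos)).sub ((hasDerivAt_pow 3 y).const_mul (2 / 9))).sub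
    ((hasDerivAt_id y).const_mul (4 / 3 * x ^ 2))).add (harctan.const_mul (4 / 3 * x ^ 3))
  refine (h.const_mul (1 / 2)).congr_deriv ?_
  simp only [id]
  push_cast
  field_simp
  ring

theorem integral_tps_kernel_of_ne_zero {x : ℝ} (hx : x ≠ 0) (b : ℝ) :
    ∫ y in (0:ℝ)..b, (1 / 2) * (x ^ 2 + y ^ 2) * log (x ^ 2 + y ^ 2) = tpsInnerPrimitive x b := by
  have hcont : Continuous fun y : ℝ => (1 / 2) * (x ^ 2 + y ^ 2) * log (x ^ 2 + y ^ 2) := by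
    fun_prop (disch := intro y; positivity)
  rw [integral_eq_sub_of_hasDerivAt (fun y _ => hasDerivAt_tpsInnerPrimitive hx y)
    (hcont.intervalIntegrable 0 b)]
  simp [tpsInnerPrimitive]

theorem log_sq_add_mul_sq {x : ℝ} (hx : x ≠ 0) (t : ℝ) :
    log (x ^ 2 + (t * x) ^ 2) = 2 * log x + log (1 + t ^ 2) := by
  rw [show x ^ 2 + (t * x) ^ 2 = x ^ 2 * (1 + t ^ 2) by ring,
    log_mul (by positivity) (by positivity), log_pow]
  push_cast
  ring

theorem integral_tps_kernel_along_ray (t x : ℝ) :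
    ∫ y in (0:ℝ)..t * x, (1 / 2) * (x ^ 2 + y ^ 2) * log (x ^ 2 + y ^ 2) =
      (t + t ^ 3 / 3) * (x ^ 3 * log x) +
        (1 / 2) * ((t + t ^ 3 / 3) * log (1 + t ^ 2) - 2 / 9 * t ^ 3 - 4 / 3 * t
          + 4 / 3 * arctan t) * x ^ 3 := by
  rcases eq_or_ne x 0 with rfl | hx
  · simp
  rw [integral_tps_kernel_of_ne_zero hx, tpsInnerPrimitive, log_sq_add_mul_sq hx,
    mul_div_cancel_right₀ t hx]
  ring

theorem continuous_pow_three_mul_log : Continuous fun x : ℝ => x ^ 3 * log x := by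
  refine ((continuous_pow 2).mul continuous_mul_log).congr fun x => ?_
  simp only [Pi.mul_apply]
  ring

theorem integral_pow_three_mul_log (a : ℝ) :
    ∫ x in (0:ℝ)..a, x ^ 3 * log x = a ^ 4 * log a / 4 - a ^ 4 / 16 := by
  have hcont : Continuous fun x : ℝ => x ^ 4 * log x / 4 - x ^ 4 / 16 := by
    refine ((((continuous_pow 3).mul continuous_mul_log).div_const 4).sub
      ((continuous_pow 4).div_const 16)).congr fun x => ?_
    simp only [Pi.mul_apply, Pi.sub_apply]
    ring
  rw [integral_eq_sub_of_hasDeriv_right hcont.continuousOn (fun x hx => ?_)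
    (continuous_pow_three_mul_log.intervalIntegrable 0 a)]
  · simp
  have hx0 : x ≠ 0 := by
    rintro rfl
    rcases le_total 0 a with h | h <;> simp [h] at hx
  refine (((((hasDerivAt_pow 4 x).mul (hasDerivAt_log hx0)).div_const 4).sub
    ((hasDerivAt_pow 4 x).div_const 16)).congr_deriv ?_).hasDerivWithinAt
  push_cast
  field_simp
  ring

theorem tps_reference_integral_general (α β : ℝ) (hα : 0 < α) :
    (∫ x in (0:ℝ)..α, ∫ y in (0:ℝ)..(β / α * x),
        (1 / 2) * (x ^ 2 + y ^ 2) * Real.log (x ^ 2 + y ^ 2)) =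
      α / 144 * (24 * α ^ 3 * Real.arctan (β / α) +
        6 * β * (3 * α ^ 2 + β ^ 2) * Real.log (α ^ 2 + β ^ 2) -
        33 * α ^ 2 * β - 7 * β ^ 3) := by
  simp_rw [integral_tps_kernel_along_ray]
  rw [integral_add ((continuous_pow_three_mul_log.const_mul _).intervalIntegrable 0 α)
      (((continuous_pow 3).const_mul _).intervalIntegrable 0 α),
    integral_const_mul, integral_const_mul, integral_pow_three_mul_log, integral_pow,
    show α ^ 2 + β ^ 2 = α ^ 2 + (β / α * α) ^ 2 by field_simp, log_sq_add_mul_sq hα.ne']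
  field_simp
  ring

/-- Reference integral of the thin plate spline `φ(r) = r² log r` over the right triangle
with vertices `(0,0)`, `(α,0)`, `(α,β)`:
`∫₀^α ∫₀^{(β/α)x} (1/2)(x² + y²) log(x² + y²) dy dx
  = (α/144) (24α³ arctan(β/α) + 6β(3α² + β²) log(α² + β²) − 33α²β − 7β³)`,
with Mathlib's convention `Real.log 0 = 0` handling the origin. -/
theorem tps_reference_integral (α β : ℝ) (hα : 0 < α) (hβ : 0 ≤ β) :
    (∫ x in (0:ℝ)..α, ∫ y in (0:ℝ)..(β / α * x),
        (1 / 2) * (x ^ 2 + y ^ 2) * Real.log (x ^ 2 + y ^ 2)) =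
      α / 144 * (24 * α ^ 3 * Real.arctan (β / α) +
        6 * β * (3 * α ^ 2 + β ^ 2) * Real.log (α ^ 2 + β ^ 2) -
        33 * α ^ 2 * β - 7 * β ^ 3) :=
  tps_reference_integral_general α β hα
end

section
/- Let α > 0 and β ≥ 0. Then the integral of the quintic polyharmonic spline kernel φ(r) = r⁵, with r = ‖(x,y)‖₂ = √(x² + y²), over the right triangle with vertices (0,0), (α,0), and (α,β) satisfies ∫_0^α ∫_0^{(β/α)x} (x² + y²)^{5/2} dy dx = (α/336) ( 15 α⁶ · arsinh(β/α) + β (33α⁴ + 26α²β² + 8β⁴) √(α² + β²) ), where arsinh denotes the inverse hyperbolic sine. -/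
/-!
Scaling `y = x t` turns the inner integral into `x ^ 6 ∫₀^{β/α} (1 + t²)^{5/2} dt`, so the double
integral factors as `α⁷/7` times a one-variable integral, which has an elementary antiderivative
built from `t √(1 + t²)` and `arsinh t`; its derivative is checked using `√(1 + t²)² = 1 + t²`.
-/

open Real intervalIntegral

theorem intervalIntegral_sqrt_sq_add_sq_pow_comp_mul (n : ℕ) {x : ℝ} (hx : 0 ≤ x) (c : ℝ) :
    ∫ y in (0:ℝ)..x * c, √(x ^ 2 + y ^ 2) ^ n = x ^ (n + 1) * ∫ t in (0:ℝ)..c, √(1 + t ^ 2) ^ n := by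
  have hscale : ∀ t : ℝ, √(x ^ 2 + (x * t) ^ 2) ^ n = x ^ n * √(1 + t ^ 2) ^ n := fun t => by
    rw [show x ^ 2 + (x * t) ^ 2 = x ^ 2 * (1 + t ^ 2) by ring, sqrt_mul (sq_nonneg x),
      sqrt_sq hx, mul_pow]
  have := smul_integral_comp_mul_left (fun y => √(x ^ 2 + y ^ 2) ^ n) x (a := 0) (b := c)
  simp only [smul_eq_mul, mul_zero, hscale, integral_const_mul] at this
  rw [← this]
  ring

noncomputable def quinticSqrtAntideriv (t : ℝ) : ℝ :=
  (t * (8 * t ^ 4 + 26 * t ^ 2 + 33) * √(1 + t ^ 2) + 15 * arsinh t) / 48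

theorem hasDerivAt_quinticSqrtAntideriv (t : ℝ) :
    HasDerivAt quinticSqrtAntideriv (√(1 + t ^ 2) ^ 5) t := by
  have hpos : 0 < 1 + t ^ 2 := by positivity
  have hsqrt : HasDerivAt (fun t : ℝ => √(1 + t ^ 2)) (2 * t / (2 * √(1 + t ^ 2))) t := by
    simpa using ((hasDerivAt_pow 2 t).const_add 1).sqrt hpos.ne'
  have hpoly : HasDerivAt (fun t : ℝ => t * (8 * t ^ 4 + 26 * t ^ 2 + 33))
      (40 * t ^ 4 + 78 * t ^ 2 + 33) t := by
    refine ((hasDerivAt_id' t).fun_mul (((hasDerivAt_pow 4 t).const_mul 8).fun_add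
      ((hasDerivAt_pow 2 t).const_mul 26) |>.add_const 33)).congr_deriv ?_
    norm_num
    ring
  refine (((hpoly.mul hsqrt).add ((hasDerivAt_arsinh t).const_mul 15)).div_const 48).congr_deriv ?_
  have hsq : √(1 + t ^ 2) ^ 2 = 1 + t ^ 2 := sq_sqrt hpos.le
  field_simp
  rw [show √(1 + t ^ 2) ^ 6 = (√(1 + t ^ 2) ^ 2) ^ 3 by ring, hsq]
  ring

theorem intervalIntegral_sqrt_one_add_sq_pow_five (c : ℝ) :
    ∫ t in (0:ℝ)..c, √(1 + t ^ 2) ^ 5 = quinticSqrtAntideriv c := by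
  rw [integral_eq_sub_of_hasDerivAt (fun t _ => hasDerivAt_quinticSqrtAntideriv t)
    (Continuous.intervalIntegrable (by fun_prop) _ _)]
  simp [quinticSqrtAntideriv]

theorem quintic_phs_reference_integral_general (α β : ℝ) (hα : 0 < α) :
    (∫ x in (0:ℝ)..α, ∫ y in (0:ℝ)..(β / α * x), (x ^ 2 + y ^ 2) ^ ((5:ℝ)/2)) =
      α / 336 * (15 * α ^ 6 * Real.arsinh (β / α) +
        β * (33 * α ^ 4 + 26 * α ^ 2 * β ^ 2 + 8 * β ^ 4) * Real.sqrt (α ^ 2 + β ^ 2)) := by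
  have hrpow : ∀ x y : ℝ, (x ^ 2 + y ^ 2) ^ ((5:ℝ)/2) = √(x ^ 2 + y ^ 2) ^ 5 := fun x y => by
    rw [rpow_div_two_eq_sqrt _ (by positivity)]
    norm_cast
  have hinner : Set.EqOn (fun x => ∫ y in (0:ℝ)..(β / α * x), √(x ^ 2 + y ^ 2) ^ 5)
      (fun x => x ^ 6 * quinticSqrtAntideriv (β / α)) (Set.uIcc 0 α) := fun x hx => by
    have hx : (0:ℝ) ≤ x := (Set.uIcc_of_le hα.le ▸ hx : x ∈ Set.Icc 0 α).1
    simp only [mul_comm (β / α) x, intervalIntegral_sqrt_sq_add_sq_pow_comp_mul 5 hx,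
      intervalIntegral_sqrt_one_add_sq_pow_five]
  have hsqrt : √(1 + (β / α) ^ 2) = √(α ^ 2 + β ^ 2) / α := by
    rw [show 1 + (β / α) ^ 2 = (α ^ 2 + β ^ 2) / α ^ 2 by field_simp, sqrt_div' _ (sq_nonneg α),
      sqrt_sq hα.le]
  simp only [hrpow]
  rw [integral_congr hinner, integral_mul_const, integral_pow, quinticSqrtAntideriv, hsqrt]
  field_simp
  ring

/-- Reference integral of the quintic polyharmonic spline `φ(r) = r⁵` over the right
triangle with vertices `(0,0)`, `(α,0)`, `(α,β)`:
`∫₀^α ∫₀^{(β/α)x} (x² + y²)^{5/2} dy dx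
  = (α/336) (15α⁶ arsinh(β/α) + β(33α⁴ + 26α²β² + 8β⁴) √(α² + β²))`. -/
theorem quintic_phs_reference_integral (α β : ℝ) (hα : 0 < α) (hβ : 0 ≤ β) :
    (∫ x in (0:ℝ)..α, ∫ y in (0:ℝ)..(β / α * x), (x ^ 2 + y ^ 2) ^ ((5:ℝ)/2)) =
      α / 336 * (15 * α ^ 6 * Real.arsinh (β / α) +
        β * (33 * α ^ 4 + 26 * α ^ 2 * β ^ 2 + 8 * β ^ 4) * Real.sqrt (α ^ 2 + β ^ 2)) :=
  quintic_phs_reference_integral_general α β hα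
end
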